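/- Let K be an n×n real symmetric positive definite matrix, S an n×n real symmetric positive semidefinite matrix, σ > 0, Y ∈ ℝⁿ with Y ≠ 0, and suppose the regularized condition number satisfies κ(K + σI) = (λmax(K) + σ)/(λmin(K) + σ) ≤ c. Let η = ‖K^{−1/2} S K^{−1/2}‖ (spectral norm) and assume η < 1, and set a = c/(1 − η)². Then, writing R(A) = ‖Y − A(A + σI)⁻¹Y‖² for the kernel ridge residual of a symmetric positive semidefinite matrix A: λmax(K + S + σI)/(a·λmax(K + σI)) ≤ (R(K + S)/R(K))^{1/2} ≤ a·λmax(K + S + σI)/λmax(K + σI). -/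

import Mathlib

/-- The square root of a positive semidefinite matrix, as `Matrix.PosSemidef.sqrt` was defined
in the older Mathlib (removed since in favour of `CFC.sqrt`). -/
noncomputable def Matrix.PosSemidef.sqrt {n : Type*} [Fintype n] [DecidableEq n] {𝕜 : Type*}
    [RCLike 𝕜] [PartialOrder 𝕜] {A : Matrix n n 𝕜} (hA : A.PosSemidef) : Matrix n n 𝕜 :=
  hA.1.eigenvectorUnitary.1 * Matrix.diagonal ((↑) ∘ (√·) ∘ hA.1.eigenvalues) *
  (star hA.1.eigenvectorUnitary : Matrix n n 𝕜)

open scoped RealInnerProductSpace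

namespace RiskRatioAux

open Matrix

variable {n : ℕ}

lemma L_mul (A B : Matrix (Fin n) (Fin n) ℝ) (x : EuclideanSpace ℝ (Fin n)) :
    toEuclideanLin (A * B) x = toEuclideanLin A (toEuclideanLin B x) := by
  simp [toEuclideanLin_apply, mulVec_mulVec]

lemma L_one (x : EuclideanSpace ℝ (Fin n)) :
    toEuclideanLin (1 : Matrix (Fin n) (Fin n) ℝ) x = x := by
  simp [toEuclideanLin_apply]

lemma L_sym {A : Matrix (Fin n) (Fin n) ℝ} (hA : A.IsHermitian)
    (x y : EuclideanSpace ℝ (Fin n)) :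
    (inner ℝ (toEuclideanLin A x) y : ℝ) = inner ℝ x (toEuclideanLin A y) :=
  (Matrix.isHermitian_iff_isSymmetric.mp hA) x y

lemma L_eigvec {A : Matrix (Fin n) (Fin n) ℝ} (hA : A.IsHermitian) (j : Fin n) :
    toEuclideanLin A (hA.eigenvectorBasis j) = hA.eigenvalues j • hA.eigenvectorBasis j := by
  have h := hA.mulVec_eigenvectorBasis j
  simp only [toEuclideanLin_apply]
  ext i
  simp [h]

lemma repr_L {A : Matrix (Fin n) (Fin n) ℝ} (hA : A.IsHermitian)
    (x : EuclideanSpace ℝ (Fin n)) (j : Fin n) :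
    hA.eigenvectorBasis.repr (toEuclideanLin A x) j
      = hA.eigenvalues j * hA.eigenvectorBasis.repr x j := by
  rw [OrthonormalBasis.repr_apply_apply, OrthonormalBasis.repr_apply_apply,
    ← L_sym hA, L_eigvec hA, real_inner_smul_left]


lemma inner_L_expand {A : Matrix (Fin n) (Fin n) ℝ} (hA : A.IsHermitian)
    (x : EuclideanSpace ℝ (Fin n)) :
    (inner ℝ x (toEuclideanLin A x) : ℝ)
      = ∑ j, hA.eigenvalues j * (hA.eigenvectorBasis.repr x j) ^ 2 := by
  rw [← LinearIsometryEquiv.inner_map_map hA.eigenvectorBasis.repr x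
    (toEuclideanLin A x), PiLp.inner_apply]
  refine Finset.sum_congr rfl fun j _ => ?_
  rw [repr_L hA]
  simp [RCLike.inner_apply]
  ring

lemma norm_sq_expand {A : Matrix (Fin n) (Fin n) ℝ} (hA : A.IsHermitian)
    (x : EuclideanSpace ℝ (Fin n)) :
    ‖x‖ ^ 2 = ∑ j, (hA.eigenvectorBasis.repr x j) ^ 2 := by
  rw [← real_inner_self_eq_norm_sq,
    ← LinearIsometryEquiv.inner_map_map hA.eigenvectorBasis.repr x x, PiLp.inner_apply]
  refine Finset.sum_congr rfl fun j _ => ?_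
  simp [RCLike.inner_apply]

lemma norm_L_sq_expand {A : Matrix (Fin n) (Fin n) ℝ} (hA : A.IsHermitian)
    (x : EuclideanSpace ℝ (Fin n)) :
    ‖toEuclideanLin A x‖ ^ 2
      = ∑ j, (hA.eigenvalues j) ^ 2 * (hA.eigenvectorBasis.repr x j) ^ 2 := by
  rw [norm_sq_expand hA]
  refine Finset.sum_congr rfl fun j _ => ?_
  rw [repr_L hA]
  ring


variable {A : Matrix (Fin n) (Fin n) ℝ}

lemma spec_nonempty (hn : 0 < n) (hA : A.IsHermitian) : (spectrum ℝ A).Nonempty :=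
  ⟨hA.eigenvalues ⟨0, hn⟩, hA.eigenvalues_mem_spectrum_real _⟩

lemma eig_le_sSup (hA : A.IsHermitian) (j : Fin n) :
    hA.eigenvalues j ≤ sSup (spectrum ℝ A) :=
  le_csSup (Matrix.finite_real_spectrum (A := A)).bddAbove (hA.eigenvalues_mem_spectrum_real j)

lemma sInf_le_eig (hA : A.IsHermitian) (j : Fin n) :
    sInf (spectrum ℝ A) ≤ hA.eigenvalues j :=
  csInf_le (Matrix.finite_real_spectrum (A := A)).bddBelow (hA.eigenvalues_mem_spectrum_real j)

lemma quad_le_sSup (hA : A.IsHermitian) (x : EuclideanSpace ℝ (Fin n)) :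
    (inner ℝ x (toEuclideanLin A x) : ℝ) ≤ sSup (spectrum ℝ A) * ‖x‖ ^ 2 := by
  rw [inner_L_expand hA, norm_sq_expand hA, Finset.mul_sum]
  exact Finset.sum_le_sum fun j _ =>
    mul_le_mul_of_nonneg_right (eig_le_sSup hA j) (sq_nonneg _)

lemma sInf_le_quad (hA : A.IsHermitian) (x : EuclideanSpace ℝ (Fin n)) :
    sInf (spectrum ℝ A) * ‖x‖ ^ 2 ≤ (inner ℝ x (toEuclideanLin A x) : ℝ) := by
  rw [inner_L_expand hA, norm_sq_expand hA, Finset.mul_sum]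
  exact Finset.sum_le_sum fun j _ =>
    mul_le_mul_of_nonneg_right (sInf_le_eig hA j) (sq_nonneg _)

lemma quad_nonneg (hA : A.PosSemidef) (x : EuclideanSpace ℝ (Fin n)) :
    0 ≤ (inner ℝ x (toEuclideanLin A x) : ℝ) := by
  rw [inner_L_expand hA.1]
  exact Finset.sum_nonneg fun j _ =>
    mul_nonneg (hA.eigenvalues_nonneg j) (sq_nonneg _)

lemma sSup_mem_spec (hn : 0 < n) (hA : A.IsHermitian) :
    sSup (spectrum ℝ A) ∈ spectrum ℝ A :=
  (spec_nonempty hn hA).csSup_mem (Matrix.finite_real_spectrum (A := A))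

lemma sInf_mem_spec (hn : 0 < n) (hA : A.IsHermitian) :
    sInf (spectrum ℝ A) ∈ spectrum ℝ A :=
  (spec_nonempty hn hA).csInf_mem (Matrix.finite_real_spectrum (A := A))

lemma exists_eigvec (hA : A.IsHermitian) {γ : ℝ} (hγ : γ ∈ spectrum ℝ A) :
    ∃ x : EuclideanSpace ℝ (Fin n), x ≠ 0 ∧ toEuclideanLin A x = γ • x := by
  have h1 : γ ∈ spectrum ℝ (toEuclideanLin A) := by
    rw [Matrix.spectrum_toEuclideanLin]; exact hγ
  have h2 : Module.End.HasEigenvalue (toEuclideanLin A) γ :=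
    Module.End.hasEigenvalue_iff_mem_spectrum.mpr h1
  obtain ⟨x, hx⟩ := h2.exists_hasEigenvector
  exact ⟨x, hx.2, hx.apply_eq_smul⟩

lemma quad_eig {γ : ℝ} {x : EuclideanSpace ℝ (Fin n)}
    (hx : toEuclideanLin A x = γ • x) :
    (inner ℝ x (toEuclideanLin A x) : ℝ) = γ * ‖x‖ ^ 2 := by
  rw [hx, real_inner_smul_right, real_inner_self_eq_norm_sq]

lemma sSup_le_of_quad (hn : 0 < n) (hA : A.IsHermitian) {r : ℝ}
    (h : ∀ x : EuclideanSpace ℝ (Fin n), (inner ℝ x (toEuclideanLin A x) : ℝ) ≤ r * ‖x‖ ^ 2) :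
    sSup (spectrum ℝ A) ≤ r := by
  obtain ⟨x, hx0, hx⟩ := exists_eigvec hA (sSup_mem_spec hn hA)
  have h1 := h x
  rw [quad_eig hx] at h1
  have hx2 : (0:ℝ) < ‖x‖ ^ 2 := pow_pos (norm_pos_iff.mpr hx0) 2
  exact le_of_mul_le_mul_right h1 hx2

lemma le_sInf_of_quad (hn : 0 < n) (hA : A.IsHermitian) {r : ℝ}
    (h : ∀ x : EuclideanSpace ℝ (Fin n), r * ‖x‖ ^ 2 ≤ (inner ℝ x (toEuclideanLin A x) : ℝ)) :
    r ≤ sInf (spectrum ℝ A) := by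
  obtain ⟨x, hx0, hx⟩ := exists_eigvec hA (sInf_mem_spec hn hA)
  have h1 := h x
  rw [quad_eig hx] at h1
  have hx2 : (0:ℝ) < ‖x‖ ^ 2 := pow_pos (norm_pos_iff.mpr hx0) 2
  exact le_of_mul_le_mul_right h1 hx2

lemma spec_eq_eig (hA : A.IsHermitian) {γ : ℝ} (hγ : γ ∈ spectrum ℝ A) :
    ∃ j, hA.eigenvalues j = γ := by
  rw [hA.spectrum_real_eq_range_eigenvalues] at hγ
  exact hγ.imp fun j h => h

lemma sInf_pos (hn : 0 < n) (hA : A.PosDef) : 0 < sInf (spectrum ℝ A) := by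
  obtain ⟨j, hj⟩ := spec_eq_eig hA.1 (sInf_mem_spec hn hA.1)
  rw [← hj]; exact hA.eigenvalues_pos j

lemma sInf_nonneg' (hn : 0 < n) (hA : A.PosSemidef) : 0 ≤ sInf (spectrum ℝ A) := by
  obtain ⟨j, hj⟩ := spec_eq_eig hA.1 (sInf_mem_spec hn hA.1)
  rw [← hj]; exact hA.eigenvalues_nonneg j

lemma norm_L_le (hn : 0 < n) (hA : A.PosSemidef) (x : EuclideanSpace ℝ (Fin n)) :
    ‖toEuclideanLin A x‖ ≤ sSup (spectrum ℝ A) * ‖x‖ := by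
  have hS0 : 0 ≤ sSup (spectrum ℝ A) :=
    (sInf_nonneg' hn hA).trans (csInf_le_csSup (spec_nonempty hn hA.1) (Matrix.finite_real_spectrum (A := A)).bddBelow
      (Matrix.finite_real_spectrum (A := A)).bddAbove)
  have hsq : ‖toEuclideanLin A x‖ ^ 2 ≤ (sSup (spectrum ℝ A) * ‖x‖) ^ 2 := by
    rw [norm_L_sq_expand hA.1, mul_pow, norm_sq_expand hA.1, Finset.mul_sum]
    refine Finset.sum_le_sum fun j _ => ?_
    refine mul_le_mul_of_nonneg_right ?_ (sq_nonneg _)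
    exact pow_le_pow_left₀ (hA.eigenvalues_nonneg j) (eig_le_sSup hA.1 j) 2
  calc ‖toEuclideanLin A x‖ = Real.sqrt (‖toEuclideanLin A x‖ ^ 2) :=
        (Real.sqrt_sq (norm_nonneg _)).symm
    _ ≤ Real.sqrt ((sSup (spectrum ℝ A) * ‖x‖) ^ 2) := Real.sqrt_le_sqrt hsq
    _ = sSup (spectrum ℝ A) * ‖x‖ := Real.sqrt_sq (by positivity)

lemma norm_L_ge (hn : 0 < n) (hA : A.PosDef) (x : EuclideanSpace ℝ (Fin n)) :
    sInf (spectrum ℝ A) * ‖x‖ ≤ ‖toEuclideanLin A x‖ := by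
  have hI0 : 0 ≤ sInf (spectrum ℝ A) := (sInf_pos hn hA).le
  have hsq : (sInf (spectrum ℝ A) * ‖x‖) ^ 2 ≤ ‖toEuclideanLin A x‖ ^ 2 := by
    rw [norm_L_sq_expand hA.1, mul_pow, norm_sq_expand hA.1, Finset.mul_sum]
    refine Finset.sum_le_sum fun j _ => ?_
    refine mul_le_mul_of_nonneg_right ?_ (sq_nonneg _)
    exact pow_le_pow_left₀ hI0 (sInf_le_eig hA.1 j) 2
  calc sInf (spectrum ℝ A) * ‖x‖ = Real.sqrt ((sInf (spectrum ℝ A) * ‖x‖) ^ 2) :=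
        (Real.sqrt_sq (by positivity)).symm
    _ ≤ Real.sqrt (‖toEuclideanLin A x‖ ^ 2) := Real.sqrt_le_sqrt hsq
    _ = ‖toEuclideanLin A x‖ := Real.sqrt_sq (norm_nonneg _)


lemma spec_shift (σ : ℝ) (A : Matrix (Fin n) (Fin n) ℝ) :
    spectrum ℝ (A + σ • 1) = (fun t => σ + t) '' spectrum ℝ A := by
  have h : A + σ • (1 : Matrix (Fin n) (Fin n) ℝ) = algebraMap ℝ _ σ + A := by
    rw [Algebra.algebraMap_eq_smul_one, add_comm]
  rw [h, ← spectrum.singleton_add_eq, Set.singleton_add]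

lemma sSup_spec_shift (hn : 0 < n) (hA : A.IsHermitian) (σ : ℝ) :
    sSup (spectrum ℝ (A + σ • 1)) = sSup (spectrum ℝ A) + σ := by
  rw [spec_shift, ← Monotone.map_csSup_of_continuousAt
    (f := fun t => σ + t) (continuous_add_left σ).continuousAt
    (fun x y hxy => by simpa using hxy) (spec_nonempty hn hA)
    (Matrix.finite_real_spectrum (A := A)).bddAbove]
  exact add_comm _ _

lemma sInf_spec_shift (hn : 0 < n) (hA : A.IsHermitian) (σ : ℝ) :
    sInf (spectrum ℝ (A + σ • 1)) = sInf (spectrum ℝ A) + σ := by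
  rw [spec_shift, ← Monotone.map_csInf_of_continuousAt
    (f := fun t => σ + t) (continuous_add_left σ).continuousAt
    (fun x y hxy => by simpa using hxy) (spec_nonempty hn hA)
    (Matrix.finite_real_spectrum (A := A)).bddBelow]
  exact add_comm _ _

lemma smul_one_posSemidef {σ : ℝ} (hσ : 0 ≤ σ) :
    (σ • (1 : Matrix (Fin n) (Fin n) ℝ)).PosSemidef := by
  have h : σ • (1 : Matrix (Fin n) (Fin n) ℝ) = Matrix.diagonal (fun _ => σ) := by
    ext i k
    by_cases h : i = k <;> simp [Matrix.one_apply, Matrix.diagonal_apply, h]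
  exact h ▸ Matrix.PosSemidef.diagonal (fun i => hσ)

lemma L_smul_one (σ : ℝ) (x : EuclideanSpace ℝ (Fin n)) :
    toEuclideanLin (σ • (1 : Matrix (Fin n) (Fin n) ℝ)) x = σ • x := by
  rw [_root_.map_smul, LinearMap.smul_apply, L_one]

lemma sqrt_isHermitian' {A : Matrix (Fin n) (Fin n) ℝ} (hA : A.PosSemidef) :
    hA.sqrt.IsHermitian := by
  unfold Matrix.IsHermitian Matrix.PosSemidef.sqrt
  rw [conjTranspose_mul, conjTranspose_mul, diagonal_conjTranspose]
  simp [Matrix.mul_assoc, Matrix.star_eq_conjTranspose, Matrix.conjTranspose_eq_transpose_of_trivial]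

lemma sqrt_mul_self' {A : Matrix (Fin n) (Fin n) ℝ} (hA : A.PosSemidef) :
    hA.sqrt * hA.sqrt = A := by
  have hU : (star hA.1.eigenvectorUnitary : Matrix (Fin n) (Fin n) ℝ) * hA.1.eigenvectorUnitary
      = 1 := Unitary.star_mul_self_of_mem hA.1.eigenvectorUnitary.2
  have hD : diagonal ((RCLike.ofReal : ℝ → ℝ) ∘ (√·) ∘ hA.1.eigenvalues)
      * diagonal ((RCLike.ofReal : ℝ → ℝ) ∘ (√·) ∘ hA.1.eigenvalues)
      = diagonal (RCLike.ofReal ∘ hA.1.eigenvalues) := by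
    rw [diagonal_mul_diagonal]; congr 1; funext i
    simp [Real.mul_self_sqrt (hA.eigenvalues_nonneg i)]
  conv_rhs => rw [hA.1.spectral_theorem, Unitary.conjStarAlgAut_apply]
  unfold Matrix.PosSemidef.sqrt
  simp only [Matrix.mul_assoc]
  rw [← Matrix.mul_assoc (star _ : Matrix (Fin n) (Fin n) ℝ), hU, Matrix.one_mul,
    ← Matrix.mul_assoc (diagonal _), hD]

lemma quad_S_le {K S : Matrix (Fin n) (Fin n) ℝ} (hK : K.PosDef)
    (x : EuclideanSpace ℝ (Fin n)) :
    (inner ℝ x (toEuclideanLin S x) : ℝ)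
      ≤ ‖Matrix.toEuclideanCLM (𝕜 := ℝ)
            ((hK.posSemidef.sqrt)⁻¹ * S * (hK.posSemidef.sqrt)⁻¹)‖
        * (inner ℝ x (toEuclideanLin K x) : ℝ) := by
  set W := hK.posSemidef.sqrt with hWdef
  have hWh : W.IsHermitian := sqrt_isHermitian' hK.posSemidef
  have hWW : W * W = K := sqrt_mul_self' hK.posSemidef
  have hdetW : IsUnit W.det := by
    refine isUnit_iff_ne_zero.mpr fun h => ?_
    have h2 := hK.det_pos
    rw [← hWW, Matrix.det_mul, h, mul_zero] at h2
    exact lt_irrefl _ h2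
  have hWinv : W⁻¹.IsHermitian := hWh.inv
  set y := toEuclideanLin W x with hy
  have hxy : toEuclideanLin W⁻¹ y = x := by
    rw [hy, ← L_mul, Matrix.nonsing_inv_mul _ hdetW, L_one]
  have happ : Matrix.toEuclideanCLM (𝕜 := ℝ) (W⁻¹ * S * W⁻¹) y
      = toEuclideanLin (W⁻¹ * S * W⁻¹) y := by
    rw [← Matrix.coe_toEuclideanCLM_eq_toEuclideanLin]; rfl
  have hstep : (inner ℝ x (toEuclideanLin S x) : ℝ)
      = inner ℝ y (toEuclideanLin (W⁻¹ * S * W⁻¹) y) := by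
    conv_lhs => rw [← hxy]
    rw [L_sym hWinv, ← L_mul, ← L_mul]
  have hnormy : (inner ℝ x (toEuclideanLin K x) : ℝ) = ‖y‖ ^ 2 := by
    rw [← real_inner_self_eq_norm_sq, hy, L_sym hWh, ← L_mul, hWW]
  rw [hstep, hnormy]
  calc (inner ℝ y (toEuclideanLin (W⁻¹ * S * W⁻¹) y) : ℝ)
      ≤ ‖y‖ * ‖toEuclideanLin (W⁻¹ * S * W⁻¹) y‖ := real_inner_le_norm _ _
    _ ≤ ‖y‖ * (‖Matrix.toEuclideanCLM (𝕜 := ℝ) (W⁻¹ * S * W⁻¹)‖ * ‖y‖) := by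
        refine mul_le_mul_of_nonneg_left ?_ (norm_nonneg _)
        rw [← happ]
        exact (Matrix.toEuclideanCLM (𝕜 := ℝ) (W⁻¹ * S * W⁻¹)).le_opNorm y
    _ = ‖Matrix.toEuclideanCLM (𝕜 := ℝ) (W⁻¹ * S * W⁻¹)‖ * ‖y‖ ^ 2 := by ring

lemma resid {A : Matrix (Fin n) (Fin n) ℝ} {σ : ℝ} (hA : (A + σ • 1).PosDef)
    (Y : EuclideanSpace ℝ (Fin n)) :
    Y - toEuclideanLin (A * (A + σ • 1)⁻¹) Y
      = σ • toEuclideanLin (A + σ • 1)⁻¹ Y := by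
  have hdet : IsUnit (A + σ • 1).det := isUnit_iff_ne_zero.mpr hA.det_pos.ne'
  have h1 : A * (A + σ • 1)⁻¹ = 1 - σ • (A + σ • 1)⁻¹ := by
    have h2 : A * (A + σ • 1)⁻¹ = ((A + σ • 1) - σ • 1) * (A + σ • 1)⁻¹ := by
      rw [add_sub_cancel_right]
    rw [h2, Matrix.sub_mul, Matrix.mul_nonsing_inv _ hdet, Matrix.smul_mul, Matrix.one_mul]
  rw [h1, map_sub, LinearMap.sub_apply, _root_.map_smul, LinearMap.smul_apply, L_one,
    sub_sub_cancel]

end RiskRatioAux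


set_option maxHeartbeats 2000000 in
/-- For real symmetric `K ≻ 0`, `S ⪰ 0`, `σ > 0`, `Y ≠ 0`, regularized
condition number `κ(K + σI) = (λmax(K) + σ)/(λmin(K) + σ) ≤ c`,
`η = ‖K^{−1/2} S K^{−1/2}‖ < 1` and `a = c/(1 − η)²`, the kernel ridge residuals
`R(A) = ‖Y − A(A + σI)⁻¹Y‖²` satisfy
`λmax(K + S + σI)/(a λmax(K + σI)) ≤ √(R(K+S)/R(K)) ≤ a λmax(K + S + σI)/λmax(K + σI)`. -/
theorem risk_ratio_bounds_of_added_layer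
    {n : ℕ} (hn : 0 < n) (K S : Matrix (Fin n) (Fin n) ℝ)
    (hKsymm : K.IsSymm) (hSsymm : S.IsSymm)
    (hK : K.PosDef) (hS : S.PosSemidef)
    (σ : ℝ) (hσ : 0 < σ) (Y : EuclideanSpace ℝ (Fin n)) (hY : Y ≠ 0)
    (c : ℝ) (hc : (sSup (spectrum ℝ K) + σ) / (sInf (spectrum ℝ K) + σ) ≤ c)
    (η : ℝ)
    (hη : η = ‖Matrix.toEuclideanCLM (𝕜 := ℝ)
        ((hK.posSemidef.sqrt)⁻¹ * S * (hK.posSemidef.sqrt)⁻¹)‖)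
    (hη1 : η < 1)
    (a : ℝ) (ha : a = c / (1 - η) ^ 2) :
    sSup (spectrum ℝ (K + S + σ • 1)) / (a * sSup (spectrum ℝ (K + σ • 1))) ≤
        Real.sqrt
          (‖Y - Matrix.toEuclideanLin ((K + S) * ((K + S) + σ • 1)⁻¹) Y‖ ^ 2 /
            ‖Y - Matrix.toEuclideanLin (K * (K + σ • 1)⁻¹) Y‖ ^ 2) ∧
      Real.sqrt
          (‖Y - Matrix.toEuclideanLin ((K + S) * ((K + S) + σ • 1)⁻¹) Y‖ ^ 2 /
            ‖Y - Matrix.toEuclideanLin (K * (K + σ • 1)⁻¹) Y‖ ^ 2) ≤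
        a * sSup (spectrum ℝ (K + S + σ • 1)) / sSup (spectrum ℝ (K + σ • 1)) := by
  classical
  open Matrix RiskRatioAux in
  have hsm : (σ • (1 : Matrix (Fin n) (Fin n) ℝ)).PosSemidef :=
    RiskRatioAux.smul_one_posSemidef hσ.le
  have hB1 : (K + σ • 1).PosDef := hK.add_posSemidef hsm
  have hKS : (K + S).PosDef := hK.add_posSemidef hS
  have hB2 : (K + S + σ • 1).PosDef := hKS.add_posSemidef hsm
  set m := sSup (spectrum ℝ (K + σ • 1)) with hm_def
  set M := sSup (spectrum ℝ (K + S + σ • 1)) with hM_def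
  set μ := sInf (spectrum ℝ (K + σ • 1)) with hmu_def
  set ν := sInf (spectrum ℝ (K + S + σ • 1)) with hnu_def
  have hμ0 : 0 < μ := RiskRatioAux.sInf_pos hn hB1
  have hν0 : 0 < ν := RiskRatioAux.sInf_pos hn hB2
  have hμm : μ ≤ m :=
    csInf_le_csSup (RiskRatioAux.spec_nonempty hn hB1.1)
      (Matrix.finite_real_spectrum (A := K + σ • 1)).bddBelow
      (Matrix.finite_real_spectrum (A := K + σ • 1)).bddAbove
  have hνM : ν ≤ M :=
    csInf_le_csSup (RiskRatioAux.spec_nonempty hn hB2.1)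
      (Matrix.finite_real_spectrum (A := K + S + σ • 1)).bddBelow
      (Matrix.finite_real_spectrum (A := K + S + σ • 1)).bddAbove
  have hm0 : 0 < m := hμ0.trans_le hμm
  have hM0 : 0 < M := hν0.trans_le hνM
  have hmc : m ≤ c * μ := by
    have h1 : m = sSup (spectrum ℝ K) + σ := RiskRatioAux.sSup_spec_shift hn hK.1 σ
    have h2 : μ = sInf (spectrum ℝ K) + σ := RiskRatioAux.sInf_spec_shift hn hK.1 σ
    rw [div_le_iff₀ (by rw [← h2]; exact hμ0)] at hc
    rw [h1, h2]; exact hc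
  have hc0 : 0 < c := by nlinarith
  have hη0 : 0 ≤ η := hη ▸ norm_nonneg _
  have h1η : 0 < 1 - η := by linarith
  have ha0 : 0 < a := by rw [ha]; positivity
  have hca : c ≤ a := by
    rw [ha, le_div_iff₀ (by positivity)]
    nlinarith [mul_nonneg (mul_nonneg hc0.le hη0) (by linarith : (0:ℝ) ≤ 2 - η)]
  have hq1 : ∀ x : EuclideanSpace ℝ (Fin n),
      (inner ℝ x (Matrix.toEuclideanLin (K + S + σ • 1) x) : ℝ)
        = inner ℝ x (Matrix.toEuclideanLin (K + σ • 1) x)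
          + inner ℝ x (Matrix.toEuclideanLin S x) := by
    intro x
    have h : (K + S + σ • 1 : Matrix (Fin n) (Fin n) ℝ) = (K + σ • 1) + S := by abel
    rw [h, map_add, LinearMap.add_apply, inner_add_right]
  have hmM : m ≤ M := by
    refine RiskRatioAux.sSup_le_of_quad hn hB1.1 fun x => ?_
    have h1 := RiskRatioAux.quad_le_sSup hB2.1 x
    have h2 := RiskRatioAux.quad_nonneg hS x
    rw [hq1 x] at h1
    linarith
  have hMm : M ≤ (1 + η) * m := by
    refine RiskRatioAux.sSup_le_of_quad hn hB2.1 fun x => ?_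
    have hq2 : (inner ℝ x (Matrix.toEuclideanLin (K + σ • 1) x) : ℝ)
        = inner ℝ x (Matrix.toEuclideanLin K x) + σ * ‖x‖ ^ 2 := by
      rw [map_add, LinearMap.add_apply, inner_add_right, RiskRatioAux.L_smul_one,
        real_inner_smul_right, real_inner_self_eq_norm_sq]
    have hS1 := RiskRatioAux.quad_S_le hK (S := S) x
    rw [← hη] at hS1
    have hB1q := RiskRatioAux.quad_le_sSup hB1.1 x
    have hx0 : (0:ℝ) ≤ ‖x‖ ^ 2 := sq_nonneg _
    rw [hq1 x]
    nlinarith [mul_nonneg hη0 (sub_nonneg.mpr hB1q),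
      mul_nonneg hη0 (mul_nonneg hσ.le hx0)]
  have hμν : μ ≤ ν := by
    refine RiskRatioAux.le_sInf_of_quad hn hB2.1 fun x => ?_
    have h1 := RiskRatioAux.sInf_le_quad hB1.1 x
    have h2 := RiskRatioAux.quad_nonneg hS x
    rw [hq1 x]
    linarith
  have hres2 := RiskRatioAux.resid (A := K + S) hB2 Y
  have hres1 := RiskRatioAux.resid (A := K) hB1 Y
  set u := Matrix.toEuclideanLin ((K + S + σ • 1 : Matrix (Fin n) (Fin n) ℝ))⁻¹ Y with hu_def
  set v := Matrix.toEuclideanLin ((K + σ • 1 : Matrix (Fin n) (Fin n) ℝ))⁻¹ Y with hv_def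
  have hdet2 : IsUnit (K + S + σ • 1 : Matrix (Fin n) (Fin n) ℝ).det :=
    isUnit_iff_ne_zero.mpr hB2.det_pos.ne'
  have hdet1 : IsUnit (K + σ • 1 : Matrix (Fin n) (Fin n) ℝ).det :=
    isUnit_iff_ne_zero.mpr hB1.det_pos.ne'
  have hLu : Matrix.toEuclideanLin (K + S + σ • 1) u = Y := by
    rw [hu_def, ← RiskRatioAux.L_mul, Matrix.mul_nonsing_inv _ hdet2, RiskRatioAux.L_one]
  have hLv : Matrix.toEuclideanLin (K + σ • 1) v = Y := by
    rw [hv_def, ← RiskRatioAux.L_mul, Matrix.mul_nonsing_inv _ hdet1, RiskRatioAux.L_one]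
  have hu0 : u ≠ 0 := fun h => hY (by rw [← hLu, h, map_zero])
  have hv0 : v ≠ 0 := fun h => hY (by rw [← hLv, h, map_zero])
  have hun : 0 < ‖u‖ := norm_pos_iff.mpr hu0
  have hvn : 0 < ‖v‖ := norm_pos_iff.mpr hv0
  have hYu : ‖Y‖ ≤ M * ‖u‖ := by
    have h := RiskRatioAux.norm_L_le hn hB2.posSemidef u; rwa [hLu] at h
  have huY : ν * ‖u‖ ≤ ‖Y‖ := by
    have h := RiskRatioAux.norm_L_ge hn hB2 u; rwa [hLu] at h
  have hYv : ‖Y‖ ≤ m * ‖v‖ := by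
    have h := RiskRatioAux.norm_L_le hn hB1.posSemidef v; rwa [hLv] at h
  have hvY : μ * ‖v‖ ≤ ‖Y‖ := by
    have h := RiskRatioAux.norm_L_ge hn hB1 v; rwa [hLv] at h
  have hcross1 : ν * ‖u‖ ≤ m * ‖v‖ := huY.trans hYv
  have hcross2 : μ * ‖v‖ ≤ M * ‖u‖ := hvY.trans hYu
  rw [hres2, hres1, norm_smul, norm_smul, Real.norm_eq_abs, abs_of_pos hσ]
  have hsqrt : Real.sqrt ((σ * ‖u‖) ^ 2 / (σ * ‖v‖) ^ 2) = ‖u‖ / ‖v‖ := by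
    rw [← div_pow, Real.sqrt_sq (by positivity), mul_div_mul_left _ _ hσ.ne']
  rw [hsqrt]
  have hM1η : M * (1 - η) ≤ m := by
    nlinarith [mul_le_mul_of_nonneg_right hMm h1η.le, mul_nonneg (mul_nonneg hm0.le hη0) hη0]
  have key2 : M ^ 2 ≤ a * (m * μ) := by
    rw [ha, div_mul_eq_mul_div, le_div_iff₀ (by positivity)]
    nlinarith [pow_le_pow_left₀ (by positivity : (0:ℝ) ≤ M * (1 - η)) hM1η 2,
      mul_le_mul_of_nonneg_right hmc hm0.le]
  have key1 : m ^ 2 ≤ a * (M * ν) := by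
    have s1 : m * m ≤ (c * μ) * m := mul_le_mul_of_nonneg_right hmc hm0.le
    have s2 : (c * μ) * m ≤ (c * ν) * m :=
      mul_le_mul_of_nonneg_right (mul_le_mul_of_nonneg_left hμν hc0.le) hm0.le
    have s3 : (c * ν) * m ≤ (c * ν) * M := mul_le_mul_of_nonneg_left hmM (by positivity)
    have s4 : (c * ν) * M ≤ (a * ν) * M :=
      mul_le_mul_of_nonneg_right (mul_le_mul_of_nonneg_right hca hν0.le) hM0.le
    nlinarith
  constructor
  · rw [div_le_div_iff₀ (by positivity) hvn]
    have h5 : μ * (M * ‖v‖) ≤ μ * (‖u‖ * (a * m)) := by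
      nlinarith [mul_le_mul_of_nonneg_left hcross2 hM0.le,
        mul_le_mul_of_nonneg_right key2 hun.le]
    exact le_of_mul_le_mul_left h5 hμ0
  · rw [div_le_div_iff₀ hvn hm0]
    have h5 : ν * (‖u‖ * m) ≤ ν * (a * M * ‖v‖) := by
      nlinarith [mul_le_mul_of_nonneg_right hcross1 hm0.le,
        mul_le_mul_of_nonneg_right key1 hvn.le]
    exact le_of_mul_le_mul_left h5 hν0
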